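/- Let G(x,y;ζ) = (ζ+2)xy(x+y) − ζ(x²+y²) − 2(ζ²+3ζ+1)xy + ζ(2ζ+1)(x+y). Then G satisfies the three symmetries: (i) G(x,y;ζ) = ζ²x²y²·G(1/x, 1/y; 1/ζ); (ii) G(x,y;ζ) = ((ζ−1)/(ζ+2))²·G(((ζ+2)x−(1+2ζ))/(1−ζ), ((ζ+2)y−(1+2ζ))/(1−ζ); −ζ−1); (iii) G(x,y;ζ) = ((ζ+2)/(ζ(2ζ+1)))²·x²y²·G(ζ(2ζ+1)/((ζ+2)x), ζ(2ζ+1)/((ζ+2)y); ζ). -/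
import Mathlib

set_option maxHeartbeats 2000000

/-- The polynomial `G(x,y;ζ)`. -/
noncomputable def Gfun (z x y : ℂ) : ℂ :=
  (z + 2) * x * y * (x + y) - z * (x ^ 2 + y ^ 2) - 2 * (z ^ 2 + 3 * z + 1) * x * y +
    z * (2 * z + 1) * (x + y)

/-- The three `S₄`-type symmetries of `G`. -/
theorem Gfun_symmetries (z x y : ℂ) (hx : x ≠ 0) (hy : y ≠ 0) (hz0 : z ≠ 0)
    (hz1 : z ≠ 1) (hz2 : z ≠ -2) (hzh : z ≠ -1/2) :
    Gfun z x y = z ^ 2 * x ^ 2 * y ^ 2 * Gfun z⁻¹ x⁻¹ y⁻¹ ∧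
    Gfun z x y = ((z - 1) / (z + 2)) ^ 2 *
      Gfun (-z - 1) (((z + 2) * x - (1 + 2 * z)) / (1 - z))
        (((z + 2) * y - (1 + 2 * z)) / (1 - z)) ∧
    Gfun z x y = ((z + 2) / (z * (2 * z + 1))) ^ 2 * x ^ 2 * y ^ 2 *
      Gfun z (z * (2 * z + 1) / ((z + 2) * x)) (z * (2 * z + 1) / ((z + 2) * y)) := by
  have h2 : z + 2 ≠ 0 := fun h => hz2 (by linear_combination h)
  have h1 : (1 : ℂ) - z ≠ 0 := fun h => hz1 (by linear_combination -h)
  have hh : 2 * z + 1 ≠ 0 := fun h => hzh (by linear_combination h / 2)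
  refine ⟨?_, ?_, ?_⟩
  · have e1 : z * z⁻¹ = 1 := mul_inv_cancel₀ hz0
    have e2 : x * x⁻¹ = 1 := mul_inv_cancel₀ hx
    have e3 : y * y⁻¹ = 1 := mul_inv_cancel₀ hy
    simp only [Gfun]
    linear_combination (((-2 : ℂ)*y⁻¹*x^2*y^2) + ((-1 : ℂ)*y⁻¹*z*x^2*y^2) + ((1 : ℂ)*y⁻¹^2*z*x^2*y^2) + ((-2 : ℂ)*x⁻¹*x^2*y^2) + ((-1 : ℂ)*x⁻¹*z*x^2*y^2) + ((2 : ℂ)*x⁻¹*y⁻¹*x^2*y^2) + ((6 : ℂ)*x⁻¹*y⁻¹*z*x^2*y^2) + ((-1 : ℂ)*x⁻¹*y⁻¹^2*z*x^2*y^2) + ((1 : ℂ)*x⁻¹^2*z*x^2*y^2) + ((-1 : ℂ)*x⁻¹^2*y⁻¹*z*x^2*y^2) + ((-2 : ℂ)*z⁻¹*y⁻¹*z*x^2*y^2) + ((-2 : ℂ)*z⁻¹*x⁻¹*z*x^2*y^2) + ((2 : ℂ)*z⁻¹*x⁻¹*y⁻¹*z*x^2*y^2)) * e1 + (((-2 :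 ℂ)*x*y^2) + ((1 : ℂ)*z*y^2) + ((-1 : ℂ)*z*x*y^2) + ((2 : ℂ)*y⁻¹*x*y^2) + ((-1 : ℂ)*y⁻¹*z*y^2) + ((6 : ℂ)*y⁻¹*z*x*y^2) + ((-2 : ℂ)*y⁻¹*z^2*y^2) + ((2 : ℂ)*y⁻¹*z^2*x*y^2) + ((-1 : ℂ)*y⁻¹^2*z*x*y^2) + ((-2 : ℂ)*y⁻¹^2*z^2*x*y^2) + ((1 : ℂ)*x⁻¹*z*x*y^2) + ((-1 : ℂ)*x⁻¹*y⁻¹*z*x*y^2) + ((-2 : ℂ)*x⁻¹*y⁻¹*z^2*x*y^2)) * e2 + (((2 : ℂ)*x*y) + ((-2 : ℂ)*x^2*y) + ((-1 : ℂ)*z*y) + ((-1 : ℂ)*z*x) + ((6 : ℂ)*z*x*y) + ((1 : ℂ)*z*x^2) + ((-1 : ℂ)*z*x^2*y) + ((-2 : ℂ)*z^2*y) + ((-2 : ℂ)*z^2*x) + ((2 : ℂ)*z^2*x*y) + ((-1 : ℂ)*y⁻¹*z*x*y) + ((1 : ℂ)*y⁻¹*z*x^2*y) + ((-2 : ℂ)*y⁻¹*z^2*x*y))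 * e3
  · have e1 : (z + 2) * (z + 2)⁻¹ = 1 := mul_inv_cancel₀ h2
    have e2 : (1 - z) * (1 - z)⁻¹ = 1 := mul_inv_cancel₀ h1
    simp only [Gfun]
    linear_combination (((-202 : ℂ)*(1-z)⁻¹) + ((13 : ℂ)*(1-z)⁻¹*y) + ((13 : ℂ)*(1-z)⁻¹*x) + ((82 : ℂ)*(1-z)⁻¹*z) + ((-7 : ℂ)*(1-z)⁻¹*z*y) + ((-7 : ℂ)*(1-z)⁻¹*z*x) + ((-32 : ℂ)*(1-z)⁻¹*z^2) + ((5 : ℂ)*(1-z)⁻¹*z^2*y) + ((5 : ℂ)*(1-z)⁻¹*z^2*x) + ((8 : ℂ)*(1-z)⁻¹*z^3) + ((-2 : ℂ)*(1-z)⁻¹*z^3*y) + ((-2 : ℂ)*(1-z)⁻¹*z^3*x) + ((728 : ℂ)*(1-z)⁻¹^2) + ((-133 : ℂ)*(1-z)⁻¹^2*y) + ((-1 : ℂ)*(1-z)⁻¹^2*y^2) + ((-133 : ℂ)*(1-z)⁻¹^2*x) + ((-2 : ℂ)*(1-z)⁻¹^2*x*y) + ((-1 : ℂ)*(1-z)⁻¹^2*x^2)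 + ((-488 : ℂ)*(1-z)⁻¹^2*z) + ((82 : ℂ)*(1-z)⁻¹^2*z*y) + ((1 : ℂ)*(1-z)⁻¹^2*z*y^2) + ((82 : ℂ)*(1-z)⁻¹^2*z*x) + ((2 : ℂ)*(1-z)⁻¹^2*z*x*y) + ((1 : ℂ)*(1-z)⁻¹^2*z*x^2) + ((186 : ℂ)*(1-z)⁻¹^2*z^2) + ((-48 : ℂ)*(1-z)⁻¹^2*z^2*y) + ((1 : ℂ)*(1-z)⁻¹^2*z^2*y^2) + ((-48 : ℂ)*(1-z)⁻¹^2*z^2*x) + ((4 : ℂ)*(1-z)⁻¹^2*z^2*x*y) + ((1 : ℂ)*(1-z)⁻¹^2*z^2*x^2) + ((-56 : ℂ)*(1-z)⁻¹^2*z^3) + ((22 : ℂ)*(1-z)⁻¹^2*z^3*y) + ((-1 : ℂ)*(1-z)⁻¹^2*z^3*y^2) + ((22 : ℂ)*(1-z)⁻¹^2*z^3*x) + ((-6 : ℂ)*(1-z)⁻¹^2*z^3*x*y) + ((-1 : ℂ)*(1-z)⁻¹^2*z^3*x^2) + ((8 : ℂ)*(1-z)⁻¹^2*z^4) + ((-4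 : ℂ)*(1-z)⁻¹^2*z^4*y) + ((-4 : ℂ)*(1-z)⁻¹^2*z^4*x) + ((2 : ℂ)*(1-z)⁻¹^2*z^4*x*y) + ((-526 : ℂ)*(1-z)⁻¹^3) + ((120 : ℂ)*(1-z)⁻¹^3*y) + ((1 : ℂ)*(1-z)⁻¹^3*y^2) + ((120 : ℂ)*(1-z)⁻¹^3*x) + ((4 : ℂ)*(1-z)⁻¹^3*x*y) + ((-2 : ℂ)*(1-z)⁻¹^3*x*y^2) + ((1 : ℂ)*(1-z)⁻¹^3*x^2) + ((-2 : ℂ)*(1-z)⁻¹^3*x^2*y) + ((730 : ℂ)*(1-z)⁻¹^3*z) + ((-183 : ℂ)*(1-z)⁻¹^3*z*y) + ((-1 : ℂ)*(1-z)⁻¹^3*z*y^2) + ((-183 : ℂ)*(1-z)⁻¹^3*z*x) + ((-4 : ℂ)*(1-z)⁻¹^3*z*x*y) + ((5 : ℂ)*(1-z)⁻¹^3*z*x*y^2) + ((-1 : ℂ)*(1-z)⁻¹^3*z*x^2) + ((5 : ℂ)*(1-z)⁻¹^3*z*x^2*y) + ((-276 : ℂ)*(1-z)⁻¹^3*z^2)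 + ((99 : ℂ)*(1-z)⁻¹^3*z^2*y) + ((-3 : ℂ)*(1-z)⁻¹^3*z^2*y^2) + ((99 : ℂ)*(1-z)⁻¹^3*z^2*x) + ((-12 : ℂ)*(1-z)⁻¹^3*z^2*x*y) + ((-3 : ℂ)*(1-z)⁻¹^3*z^2*x*y^2) + ((-3 : ℂ)*(1-z)⁻¹^3*z^2*x^2) + ((-3 : ℂ)*(1-z)⁻¹^3*z^2*x^2*y) + ((88 : ℂ)*(1-z)⁻¹^3*z^3) + ((-48 : ℂ)*(1-z)⁻¹^3*z^3*y) + ((5 : ℂ)*(1-z)⁻¹^3*z^3*y^2) + ((-48 : ℂ)*(1-z)⁻¹^3*z^3*x) + ((20 : ℂ)*(1-z)⁻¹^3*z^3*x*y) + ((-1 : ℂ)*(1-z)⁻¹^3*z^3*x*y^2) + ((5 : ℂ)*(1-z)⁻¹^3*z^3*x^2) + ((-1 : ℂ)*(1-z)⁻¹^3*z^3*x^2*y) + ((-16 : ℂ)*(1-z)⁻¹^3*z^4) + ((12 : ℂ)*(1-z)⁻¹^3*z^4*y) + ((-2 : ℂ)*(1-z)⁻¹^3*z^4*y^2) + ((12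 : ℂ)*(1-z)⁻¹^3*z^4*x) + ((-8 : ℂ)*(1-z)⁻¹^3*z^4*x*y) + ((1 : ℂ)*(1-z)⁻¹^3*z^4*x*y^2) + ((-2 : ℂ)*(1-z)⁻¹^3*z^4*x^2) + ((1 : ℂ)*(1-z)⁻¹^3*z^4*x^2*y) + ((82 : ℂ)*(z+2)⁻¹*(1-z)⁻¹) + ((-1 : ℂ)*(z+2)⁻¹*(1-z)⁻¹*y) + ((-1 : ℂ)*(z+2)⁻¹*(1-z)⁻¹*x) + ((-38 : ℂ)*(z+2)⁻¹*(1-z)⁻¹*z) + ((-1 : ℂ)*(z+2)⁻¹*(1-z)⁻¹*z*y) + ((-1 : ℂ)*(z+2)⁻¹*(1-z)⁻¹*z*x) + ((18 : ℂ)*(z+2)⁻¹*(1-z)⁻¹*z^2) + ((3 : ℂ)*(z+2)⁻¹*(1-z)⁻¹*z^2*y) + ((3 : ℂ)*(z+2)⁻¹*(1-z)⁻¹*z^2*x) + ((-16 : ℂ)*(z+2)⁻¹*(1-z)⁻¹*z^3) + ((1 : ℂ)*(z+2)⁻¹*(1-z)⁻¹*z^3*y) + ((1 : ℂ)*(z+2)⁻¹*(1-z)⁻¹*z^3*x)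 + ((8 : ℂ)*(z+2)⁻¹*(1-z)⁻¹*z^4) + ((-2 : ℂ)*(z+2)⁻¹*(1-z)⁻¹*z^4*y) + ((-2 : ℂ)*(z+2)⁻¹*(1-z)⁻¹*z^4*x) + ((-326 : ℂ)*(z+2)⁻¹*(1-z)⁻¹^2) + ((4 : ℂ)*(z+2)⁻¹*(1-z)⁻¹^2*y) + ((-2 : ℂ)*(z+2)⁻¹*(1-z)⁻¹^2*y^2) + ((4 : ℂ)*(z+2)⁻¹*(1-z)⁻¹^2*x) + ((-4 : ℂ)*(z+2)⁻¹*(1-z)⁻¹^2*x*y) + ((-2 : ℂ)*(z+2)⁻¹*(1-z)⁻¹^2*x^2) + ((238 : ℂ)*(z+2)⁻¹*(1-z)⁻¹^2*z) + ((4 : ℂ)*(z+2)⁻¹*(1-z)⁻¹^2*z*y) + ((1 : ℂ)*(z+2)⁻¹*(1-z)⁻¹^2*z*y^2) + ((4 : ℂ)*(z+2)⁻¹*(1-z)⁻¹^2*z*x) + ((2 : ℂ)*(z+2)⁻¹*(1-z)⁻¹^2*z*x*y) + ((1 : ℂ)*(z+2)⁻¹*(1-z)⁻¹^2*z*x^2)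 + ((-116 : ℂ)*(z+2)⁻¹*(1-z)⁻¹^2*z^2) + ((-14 : ℂ)*(z+2)⁻¹*(1-z)⁻¹^2*z^2*y) + ((3 : ℂ)*(z+2)⁻¹*(1-z)⁻¹^2*z^2*y^2) + ((-14 : ℂ)*(z+2)⁻¹*(1-z)⁻¹^2*z^2*x) + ((10 : ℂ)*(z+2)⁻¹*(1-z)⁻¹^2*z^2*x*y) + ((3 : ℂ)*(z+2)⁻¹*(1-z)⁻¹^2*z^2*x^2) + ((74 : ℂ)*(z+2)⁻¹*(1-z)⁻¹^2*z^3) + ((-4 : ℂ)*(z+2)⁻¹*(1-z)⁻¹^2*z^3*y) + ((-1 : ℂ)*(z+2)⁻¹*(1-z)⁻¹^2*z^3*y^2) + ((-4 : ℂ)*(z+2)⁻¹*(1-z)⁻¹^2*z^3*x) + ((-8 : ℂ)*(z+2)⁻¹*(1-z)⁻¹^2*z^3*x*y) + ((-1 : ℂ)*(z+2)⁻¹*(1-z)⁻¹^2*z^3*x^2) + ((-40 : ℂ)*(z+2)⁻¹*(1-z)⁻¹^2*z^4) + ((14 : ℂ)*(z+2)⁻¹*(1-z)⁻¹^2*z^4*y)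 + ((-1 : ℂ)*(z+2)⁻¹*(1-z)⁻¹^2*z^4*y^2) + ((14 : ℂ)*(z+2)⁻¹*(1-z)⁻¹^2*z^4*x) + ((-2 : ℂ)*(z+2)⁻¹*(1-z)⁻¹^2*z^4*x*y) + ((-1 : ℂ)*(z+2)⁻¹*(1-z)⁻¹^2*z^4*x^2) + ((8 : ℂ)*(z+2)⁻¹*(1-z)⁻¹^2*z^5) + ((-4 : ℂ)*(z+2)⁻¹*(1-z)⁻¹^2*z^5*y) + ((-4 : ℂ)*(z+2)⁻¹*(1-z)⁻¹^2*z^5*x) + ((2 : ℂ)*(z+2)⁻¹*(1-z)⁻¹^2*z^5*x*y) + ((244 : ℂ)*(z+2)⁻¹*(1-z)⁻¹^3) + ((-3 : ℂ)*(z+2)⁻¹*(1-z)⁻¹^3*y) + ((2 : ℂ)*(z+2)⁻¹*(1-z)⁻¹^3*y^2) + ((-3 : ℂ)*(z+2)⁻¹*(1-z)⁻¹^3*x) + ((8 : ℂ)*(z+2)⁻¹*(1-z)⁻¹^3*x*y) + ((-4 : ℂ)*(z+2)⁻¹*(1-z)⁻¹^3*x*y^2) + ((2 : ℂ)*(z+2)⁻¹*(1-z)⁻¹^3*x^2)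 + ((-4 : ℂ)*(z+2)⁻¹*(1-z)⁻¹^3*x^2*y) + ((-362 : ℂ)*(z+2)⁻¹*(1-z)⁻¹^3*z) + ((-3 : ℂ)*(z+2)⁻¹*(1-z)⁻¹^3*z*y) + ((-1 : ℂ)*(z+2)⁻¹*(1-z)⁻¹^3*z*y^2) + ((-3 : ℂ)*(z+2)⁻¹*(1-z)⁻¹^3*z*x) + ((-4 : ℂ)*(z+2)⁻¹*(1-z)⁻¹^3*z*x*y) + ((8 : ℂ)*(z+2)⁻¹*(1-z)⁻¹^3*z*x*y^2) + ((-1 : ℂ)*(z+2)⁻¹*(1-z)⁻¹^3*z*x^2) + ((8 : ℂ)*(z+2)⁻¹*(1-z)⁻¹^3*z*x^2*y) + ((178 : ℂ)*(z+2)⁻¹*(1-z)⁻¹^3*z^2) + ((15 : ℂ)*(z+2)⁻¹*(1-z)⁻¹^3*z^2*y) + ((-7 : ℂ)*(z+2)⁻¹*(1-z)⁻¹^3*z^2*y^2) + ((15 : ℂ)*(z+2)⁻¹*(1-z)⁻¹^3*z^2*x) + ((-28 : ℂ)*(z+2)⁻¹*(1-z)⁻¹^3*z^2*x*y) + ((-1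 : ℂ)*(z+2)⁻¹*(1-z)⁻¹^3*z^2*x*y^2) + ((-7 : ℂ)*(z+2)⁻¹*(1-z)⁻¹^3*z^2*x^2) + ((-1 : ℂ)*(z+2)⁻¹*(1-z)⁻¹^3*z^2*x^2*y) + ((-100 : ℂ)*(z+2)⁻¹*(1-z)⁻¹^3*z^3) + ((3 : ℂ)*(z+2)⁻¹*(1-z)⁻¹^3*z^3*y) + ((7 : ℂ)*(z+2)⁻¹*(1-z)⁻¹^3*z^3*y^2) + ((3 : ℂ)*(z+2)⁻¹*(1-z)⁻¹^3*z^3*x) + ((28 : ℂ)*(z+2)⁻¹*(1-z)⁻¹^3*z^3*x*y) + ((-5 : ℂ)*(z+2)⁻¹*(1-z)⁻¹^3*z^3*x*y^2) + ((7 : ℂ)*(z+2)⁻¹*(1-z)⁻¹^3*z^3*x^2) + ((-5 : ℂ)*(z+2)⁻¹*(1-z)⁻¹^3*z^3*x^2*y) + ((56 : ℂ)*(z+2)⁻¹*(1-z)⁻¹^3*z^4) + ((-24 : ℂ)*(z+2)⁻¹*(1-z)⁻¹^3*z^4*y) + ((1 : ℂ)*(z+2)⁻¹*(1-z)⁻¹^3*z^4*y^2)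 + ((-24 : ℂ)*(z+2)⁻¹*(1-z)⁻¹^3*z^4*x) + ((4 : ℂ)*(z+2)⁻¹*(1-z)⁻¹^3*z^4*x*y) + ((1 : ℂ)*(z+2)⁻¹*(1-z)⁻¹^3*z^4*x*y^2) + ((1 : ℂ)*(z+2)⁻¹*(1-z)⁻¹^3*z^4*x^2) + ((1 : ℂ)*(z+2)⁻¹*(1-z)⁻¹^3*z^4*x^2*y) + ((-16 : ℂ)*(z+2)⁻¹*(1-z)⁻¹^3*z^5) + ((12 : ℂ)*(z+2)⁻¹*(1-z)⁻¹^3*z^5*y) + ((-2 : ℂ)*(z+2)⁻¹*(1-z)⁻¹^3*z^5*y^2) + ((12 : ℂ)*(z+2)⁻¹*(1-z)⁻¹^3*z^5*x) + ((-8 : ℂ)*(z+2)⁻¹*(1-z)⁻¹^3*z^5*x*y) + ((1 : ℂ)*(z+2)⁻¹*(1-z)⁻¹^3*z^5*x*y^2) + ((-2 : ℂ)*(z+2)⁻¹*(1-z)⁻¹^3*z^5*x^2) + ((1 : ℂ)*(z+2)⁻¹*(1-z)⁻¹^3*z^5*x^2*y)) * e1 + (((2 : ℂ)*x*y) + ((-2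 : ℂ)*x*y^2) + ((-2 : ℂ)*x^2*y) + ((-1 : ℂ)*z*y) + ((1 : ℂ)*z*y^2) + ((-1 : ℂ)*z*x) + ((6 : ℂ)*z*x*y) + ((-1 : ℂ)*z*x*y^2) + ((1 : ℂ)*z*x^2) + ((-1 : ℂ)*z*x^2*y) + ((-2 : ℂ)*z^2*y) + ((-2 : ℂ)*z^2*x) + ((2 : ℂ)*z^2*x*y) + ((202 : ℂ)*(1-z)⁻¹) + ((-13 : ℂ)*(1-z)⁻¹*y) + ((-13 : ℂ)*(1-z)⁻¹*x) + ((2 : ℂ)*(1-z)⁻¹*x*y) + ((-2 : ℂ)*(1-z)⁻¹*x*y^2) + ((-2 : ℂ)*(1-z)⁻¹*x^2*y) + ((-82 : ℂ)*(1-z)⁻¹*z) + ((6 : ℂ)*(1-z)⁻¹*z*y) + ((1 : ℂ)*(1-z)⁻¹*z*y^2) + ((6 : ℂ)*(1-z)⁻¹*z*x) + ((4 : ℂ)*(1-z)⁻¹*z*x*y) + ((1 : ℂ)*(1-z)⁻¹*z*x*y^2) + ((1 : ℂ)*(1-z)⁻¹*z*x^2) + ((1 : ℂ)*(1-z)⁻¹*z*x^2*y)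 + ((32 : ℂ)*(1-z)⁻¹*z^2) + ((-6 : ℂ)*(1-z)⁻¹*z^2*y) + ((-1 : ℂ)*(1-z)⁻¹*z^2*y^2) + ((-6 : ℂ)*(1-z)⁻¹*z^2*x) + ((-4 : ℂ)*(1-z)⁻¹*z^2*x*y) + ((1 : ℂ)*(1-z)⁻¹*z^2*x*y^2) + ((-1 : ℂ)*(1-z)⁻¹*z^2*x^2) + ((1 : ℂ)*(1-z)⁻¹*z^2*x^2*y) + ((-8 : ℂ)*(1-z)⁻¹*z^3) + ((4 : ℂ)*(1-z)⁻¹*z^3*y) + ((4 : ℂ)*(1-z)⁻¹*z^3*x) + ((-2 : ℂ)*(1-z)⁻¹*z^3*x*y) + ((-526 : ℂ)*(1-z)⁻¹^2) + ((120 : ℂ)*(1-z)⁻¹^2*y) + ((1 : ℂ)*(1-z)⁻¹^2*y^2) + ((120 : ℂ)*(1-z)⁻¹^2*x) + ((4 : ℂ)*(1-z)⁻¹^2*x*y) + ((-2 : ℂ)*(1-z)⁻¹^2*x*y^2) + ((1 : ℂ)*(1-z)⁻¹^2*x^2) + ((-2 : ℂ)*(1-z)⁻¹^2*x^2*y) +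 ((204 : ℂ)*(1-z)⁻¹^2*z) + ((-63 : ℂ)*(1-z)⁻¹^2*z*y) + ((-63 : ℂ)*(1-z)⁻¹^2*z*x) + ((3 : ℂ)*(1-z)⁻¹^2*z*x*y^2) + ((3 : ℂ)*(1-z)⁻¹^2*z*x^2*y) + ((-72 : ℂ)*(1-z)⁻¹^2*z^2) + ((36 : ℂ)*(1-z)⁻¹^2*z^2*y) + ((-3 : ℂ)*(1-z)⁻¹^2*z^2*y^2) + ((36 : ℂ)*(1-z)⁻¹^2*z^2*x) + ((-12 : ℂ)*(1-z)⁻¹^2*z^2*x*y) + ((-3 : ℂ)*(1-z)⁻¹^2*z^2*x^2) + ((16 : ℂ)*(1-z)⁻¹^2*z^3) + ((-12 : ℂ)*(1-z)⁻¹^2*z^3*y) + ((2 : ℂ)*(1-z)⁻¹^2*z^3*y^2) + ((-12 : ℂ)*(1-z)⁻¹^2*z^3*x) + ((8 : ℂ)*(1-z)⁻¹^2*z^3*x*y) + ((-1 : ℂ)*(1-z)⁻¹^2*z^3*x*y^2) + ((2 : ℂ)*(1-z)⁻¹^2*z^3*x^2) + ((-1 : ℂ)*(1-z)⁻¹^2*z^3*x^2*y)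 + ((-486 : ℂ)*(z+2)⁻¹*(1-z)⁻¹) + ((27 : ℂ)*(z+2)⁻¹*(1-z)⁻¹*y) + ((27 : ℂ)*(z+2)⁻¹*(1-z)⁻¹*x) + ((1296 : ℂ)*(z+2)⁻¹*(1-z)⁻¹^2) + ((-243 : ℂ)*(z+2)⁻¹*(1-z)⁻¹^2*y) + ((-243 : ℂ)*(z+2)⁻¹*(1-z)⁻¹^2*x) + ((162 : ℂ)*(z+2)⁻¹^2*(1-z)⁻¹) + ((-486 : ℂ)*(z+2)⁻¹^2*(1-z)⁻¹^2)) * e2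
  · have e1 : ((z + 2) * x) * ((z + 2) * x)⁻¹ = 1 := mul_inv_cancel₀ (mul_ne_zero h2 hx)
    have e2 : ((z + 2) * y) * ((z + 2) * y)⁻¹ = 1 := mul_inv_cancel₀ (mul_ne_zero h2 hy)
    have e3 : (z * (2 * z + 1)) * (z * (2 * z + 1))⁻¹ = 1 := mul_inv_cancel₀ (mul_ne_zero hz0 hh)
    simp only [Gfun]
    linear_combination (((-2 : ℂ)*(z*(2*z+1))⁻¹^2*z^2*x*y^2) + ((1 : ℂ)*(z*(2*z+1))⁻¹^2*z^3*y^2) + ((-9 : ℂ)*(z*(2*z+1))⁻¹^2*z^3*x*y^2) + ((4 : ℂ)*(z*(2*z+1))⁻¹^2*z^4*y^2) + ((-12 : ℂ)*(z*(2*z+1))⁻¹^2*z^4*x*y^2) + ((4 : ℂ)*(z*(2*z+1))⁻¹^2*z^5*y^2) + ((-4 : ℂ)*(z*(2*z+1))⁻¹^2*z^5*x*y^2) + ((4 : ℂ)*((z+2)*y)⁻¹*(z*(2*z+1))⁻¹^2*z^2*x*y^2) + ((-2 : ℂ)*((z+2)*y)⁻¹*(z*(2*z+1))⁻¹^2*z^3*y^2)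 + ((30 : ℂ)*((z+2)*y)⁻¹*(z*(2*z+1))⁻¹^2*z^3*x*y^2) + ((-13 : ℂ)*((z+2)*y)⁻¹*(z*(2*z+1))⁻¹^2*z^4*y^2) + ((82 : ℂ)*((z+2)*y)⁻¹*(z*(2*z+1))⁻¹^2*z^4*x*y^2) + ((-30 : ℂ)*((z+2)*y)⁻¹*(z*(2*z+1))⁻¹^2*z^5*y^2) + ((98 : ℂ)*((z+2)*y)⁻¹*(z*(2*z+1))⁻¹^2*z^5*x*y^2) + ((-28 : ℂ)*((z+2)*y)⁻¹*(z*(2*z+1))⁻¹^2*z^6*y^2) + ((48 : ℂ)*((z+2)*y)⁻¹*(z*(2*z+1))⁻¹^2*z^6*x*y^2) + ((-8 : ℂ)*((z+2)*y)⁻¹*(z*(2*z+1))⁻¹^2*z^7*y^2) + ((8 : ℂ)*((z+2)*y)⁻¹*(z*(2*z+1))⁻¹^2*z^7*x*y^2) + ((-4 : ℂ)*((z+2)*y)⁻¹^2*(z*(2*z+1))⁻¹^2*z^3*x*y^2) + ((-28 : ℂ)*((z+2)*y)⁻¹^2*(z*(2*z+1))⁻¹^2*z^4*x*y^2) + ((-73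 : ℂ)*((z+2)*y)⁻¹^2*(z*(2*z+1))⁻¹^2*z^5*x*y^2) + ((-86 : ℂ)*((z+2)*y)⁻¹^2*(z*(2*z+1))⁻¹^2*z^6*x*y^2) + ((-44 : ℂ)*((z+2)*y)⁻¹^2*(z*(2*z+1))⁻¹^2*z^7*x*y^2) + ((-8 : ℂ)*((z+2)*y)⁻¹^2*(z*(2*z+1))⁻¹^2*z^8*x*y^2) + ((2 : ℂ)*((z+2)*x)⁻¹*(z*(2*z+1))⁻¹^2*z^3*x*y^2) + ((9 : ℂ)*((z+2)*x)⁻¹*(z*(2*z+1))⁻¹^2*z^4*x*y^2) + ((12 : ℂ)*((z+2)*x)⁻¹*(z*(2*z+1))⁻¹^2*z^5*x*y^2) + ((4 : ℂ)*((z+2)*x)⁻¹*(z*(2*z+1))⁻¹^2*z^6*x*y^2) + ((-4 : ℂ)*((z+2)*x)⁻¹*((z+2)*y)⁻¹*(z*(2*z+1))⁻¹^2*z^3*x*y^2) + ((-28 : ℂ)*((z+2)*x)⁻¹*((z+2)*y)⁻¹*(z*(2*z+1))⁻¹^2*z^4*x*y^2) + ((-73 : ℂ)*((z+2)*x)⁻¹*((z+2)*y)⁻¹*(z*(2*z+1))⁻¹^2*z^5*x*y^2)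 + ((-86 : ℂ)*((z+2)*x)⁻¹*((z+2)*y)⁻¹*(z*(2*z+1))⁻¹^2*z^6*x*y^2) + ((-44 : ℂ)*((z+2)*x)⁻¹*((z+2)*y)⁻¹*(z*(2*z+1))⁻¹^2*z^7*x*y^2) + ((-8 : ℂ)*((z+2)*x)⁻¹*((z+2)*y)⁻¹*(z*(2*z+1))⁻¹^2*z^8*x*y^2)) * e1 + (((2 : ℂ)*(z*(2*z+1))⁻¹^2*z^2*x*y) + ((-2 : ℂ)*(z*(2*z+1))⁻¹^2*z^2*x^2*y) + ((-1 : ℂ)*(z*(2*z+1))⁻¹^2*z^3*y) + ((-1 : ℂ)*(z*(2*z+1))⁻¹^2*z^3*x) + ((14 : ℂ)*(z*(2*z+1))⁻¹^2*z^3*x*y) + ((1 : ℂ)*(z*(2*z+1))⁻¹^2*z^3*x^2) + ((-9 : ℂ)*(z*(2*z+1))⁻¹^2*z^3*x^2*y) + ((-6 : ℂ)*(z*(2*z+1))⁻¹^2*z^4*y) + ((-6 : ℂ)*(z*(2*z+1))⁻¹^2*z^4*x) + ((34 : ℂ)*(z*(2*z+1))⁻¹^2*z^4*x*y) + ((4 :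 ℂ)*(z*(2*z+1))⁻¹^2*z^4*x^2) + ((-12 : ℂ)*(z*(2*z+1))⁻¹^2*z^4*x^2*y) + ((-12 : ℂ)*(z*(2*z+1))⁻¹^2*z^5*y) + ((-12 : ℂ)*(z*(2*z+1))⁻¹^2*z^5*x) + ((32 : ℂ)*(z*(2*z+1))⁻¹^2*z^5*x*y) + ((4 : ℂ)*(z*(2*z+1))⁻¹^2*z^5*x^2) + ((-4 : ℂ)*(z*(2*z+1))⁻¹^2*z^5*x^2*y) + ((-8 : ℂ)*(z*(2*z+1))⁻¹^2*z^6*y) + ((-8 : ℂ)*(z*(2*z+1))⁻¹^2*z^6*x) + ((8 : ℂ)*(z*(2*z+1))⁻¹^2*z^6*x*y) + ((-2 : ℂ)*((z+2)*y)⁻¹*(z*(2*z+1))⁻¹^2*z^3*x*y) + ((2 : ℂ)*((z+2)*y)⁻¹*(z*(2*z+1))⁻¹^2*z^3*x^2*y) + ((-13 : ℂ)*((z+2)*y)⁻¹*(z*(2*z+1))⁻¹^2*z^4*x*y) + ((9 : ℂ)*((z+2)*y)⁻¹*(z*(2*z+1))⁻¹^2*z^4*x^2*y) + ((-30 : ℂ)*((z+2)*y)⁻¹*(z*(2*z+1))⁻¹^2*z^5*x*y)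 + ((12 : ℂ)*((z+2)*y)⁻¹*(z*(2*z+1))⁻¹^2*z^5*x^2*y) + ((-28 : ℂ)*((z+2)*y)⁻¹*(z*(2*z+1))⁻¹^2*z^6*x*y) + ((4 : ℂ)*((z+2)*y)⁻¹*(z*(2*z+1))⁻¹^2*z^6*x^2*y) + ((-8 : ℂ)*((z+2)*y)⁻¹*(z*(2*z+1))⁻¹^2*z^7*x*y)) * e2 + (((2 : ℂ)*x*y) + ((-2 : ℂ)*x*y^2) + ((-2 : ℂ)*x^2*y) + ((-1 : ℂ)*z*y) + ((1 : ℂ)*z*y^2) + ((-1 : ℂ)*z*x) + ((6 : ℂ)*z*x*y) + ((-1 : ℂ)*z*x*y^2) + ((1 : ℂ)*z*x^2) + ((-1 : ℂ)*z*x^2*y) + ((-2 : ℂ)*z^2*y) + ((-2 : ℂ)*z^2*x) + ((2 : ℂ)*z^2*x*y) + ((2 : ℂ)*(z*(2*z+1))⁻¹*z*x*y) + ((-2 : ℂ)*(z*(2*z+1))⁻¹*z*x*y^2) + ((-2 : ℂ)*(z*(2*z+1))⁻¹*z*x^2*y) + ((-1 : ℂ)*(z*(2*z+1))⁻¹*z^2*y)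 + ((1 : ℂ)*(z*(2*z+1))⁻¹*z^2*y^2) + ((-1 : ℂ)*(z*(2*z+1))⁻¹*z^2*x) + ((10 : ℂ)*(z*(2*z+1))⁻¹*z^2*x*y) + ((-5 : ℂ)*(z*(2*z+1))⁻¹*z^2*x*y^2) + ((1 : ℂ)*(z*(2*z+1))⁻¹*z^2*x^2) + ((-5 : ℂ)*(z*(2*z+1))⁻¹*z^2*x^2*y) + ((-4 : ℂ)*(z*(2*z+1))⁻¹*z^3*y) + ((2 : ℂ)*(z*(2*z+1))⁻¹*z^3*y^2) + ((-4 : ℂ)*(z*(2*z+1))⁻¹*z^3*x) + ((14 : ℂ)*(z*(2*z+1))⁻¹*z^3*x*y) + ((-2 : ℂ)*(z*(2*z+1))⁻¹*z^3*x*y^2) + ((2 : ℂ)*(z*(2*z+1))⁻¹*z^3*x^2) + ((-2 : ℂ)*(z*(2*z+1))⁻¹*z^3*x^2*y) + ((-4 : ℂ)*(z*(2*z+1))⁻¹*z^4*y) + ((-4 : ℂ)*(z*(2*z+1))⁻¹*z^4*x) + ((4 : ℂ)*(z*(2*z+1))⁻¹*z^4*x*y)) * e3
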